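/- Let γ : ℝ → ℂ be a smooth curve, written γ(t) = a(t) + i·b(t), and define F : ℝ × S^{n-1} → ℂⁿ ≅ ℝⁿ × ℝⁿ by F(t, θ) = (a(t)·θ, b(t)·θ). Then F pulls back the standard symplectic form ω = Σⱼ dxⱼ ∧ dyⱼ on ℂⁿ to zero; i.e., the image of F (the Polterovich surgery handle V_γ = ∪_t γ(t)·S^{n-1}) is an isotropic, hence (being n-dimensional when γ' ≠ 0) Lagrangian, submanifold of ℂⁿ. -/
import Mathlib


open scoped RealInnerProductSpace

/-- The Polterovich handle `F(t, θ) = (a(t)·θ, b(t)·θ)` pulls back the standard symplectic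
form `ω = Σ dxⱼ ∧ dyⱼ` on `ℂⁿ = ℝⁿ × ℝⁿ` to zero: for any tangent vectors `(c, v)`, `(c', w)`
to `ℝ × Sⁿ⁻¹` at `(t, θ)` (so `v, w ⊥ θ`), the symplectic pairing of their images under the
differential of `F` vanishes. -/
theorem stmt_4 (n : ℕ) (a b : ℝ → ℝ) (ha : ContDiff ℝ (⊤ : ℕ∞) a) (hb : ContDiff ℝ (⊤ : ℕ∞) b) :
    ∀ (t : ℝ) (θ v w : EuclideanSpace ℝ (Fin n)), ‖θ‖ = 1 → ⟪θ, v⟫ = 0 → ⟪θ, w⟫ = 0 →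
      ∀ c c' : ℝ,
        (⟪(c * deriv a t) • θ + a t • v, (c' * deriv b t) • θ + b t • w⟫ -
          ⟪(c * deriv b t) • θ + b t • v, (c' * deriv a t) • θ + a t • w⟫ : ℝ) = 0 := by
  intro t θ v w hθ hv hw c c'
  have hv' : ⟪v, θ⟫ = 0 := by rw [real_inner_comm]; exact hv
  have hw' : ⟪w, θ⟫ = 0 := by rw [real_inner_comm]; exact hw
  have hθθ : ⟪θ, θ⟫ = 1 := by
    rw [real_inner_self_eq_norm_sq, hθ]; norm_num
  simp only [inner_add_left, inner_add_right, real_inner_smul_left, real_inner_smul_right,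
    hv, hw, hv', hw', hθθ, real_inner_comm v w]
  ring
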